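/- arXiv:2103.11292 — 7 statements merged into one kernel-verified Lean document; each statement's English description precedes it below -/
import Mathlib

section
/- Let k₁, k₂, k_i ∈ ℝ, and let x₁, x₂, d, a, b, u : ℝ → ℝ be functions such that x₁, x₂ are differentiable, d is twice differentiable, x₁ is continuous, b(t) ≠ 0 for all t, and for all t: x₁'(t) = x₂(t) + d(t), x₂'(t) = a(t) + b(t)·u(t), and u(t) = -b(t)⁻¹·(a(t) + k₁·x₁(t) + k₂·x₂(t) + k_i·∫₀ᵗ x₁(s) ds). Then x₁ is three times differentiable and x₁'''(t) + k₂·x₁''(t) + k₁·x₁'(t) + k_i·x₁(t) = k₂·d'(t) + d''(t) for all t. -/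
/-! Along a trajectory the control cancels `a` exactly, so `ẋ₂ = -v` with the feedback signal
`v = k₁x₁ + k₂x₂ + kᵢ∫₀ᵗx₁`. Differentiating `ẋ₁ = x₂ + d` twice and substituting `ẍ₁ = -v + ḋ`
and `v̇ = k₁ẋ₁ + k₂ẋ₂ + kᵢx₁`, the terms `k₂ẋ₂` cancel and only the disturbance terms survive. -/

lemma hasDerivAt_linear_add_integral {x₁ x₂ : ℝ → ℝ} (k₁ k₂ kᵢ t₀ t : ℝ)
    (hx₁ : Differentiable ℝ x₁) (hx₂ : DifferentiableAt ℝ x₂ t) :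
    HasDerivAt (fun t => k₁ * x₁ t + k₂ * x₂ t + kᵢ * ∫ s in t₀..t, x₁ s)
      (k₁ * deriv x₁ t + k₂ * deriv x₂ t + kᵢ * x₁ t) t :=
  (((hx₁ t).hasDerivAt.const_mul k₁).add (hx₂.hasDerivAt.const_mul k₂)).add
    ((hx₁.continuous.integral_hasStrictDerivAt t₀ t).hasDerivAt.const_mul kᵢ)

lemma deriv_eq_neg_of_inverse_control {x₂ a b u v : ℝ → ℝ} (hb : ∀ t, b t ≠ 0)
    (hdx₂ : ∀ t, deriv x₂ t = a t + b t * u t) (hu : ∀ t, u t = -(b t)⁻¹ * (a t + v t)) :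
    deriv x₂ = -v := by
  funext t
  rw [hdx₂, hu, Pi.neg_apply]
  field_simp [hb t]
  ring

theorem stmt_3_general (k₁ k₂ kᵢ : ℝ) (x₁ x₂ d a b u : ℝ → ℝ)
    (hx₁ : Differentiable ℝ x₁) (hx₂ : Differentiable ℝ x₂)
    (hd : Differentiable ℝ d) (hd' : Differentiable ℝ (deriv d))
    (hb : ∀ t, b t ≠ 0)
    (hdx₁ : ∀ t, deriv x₁ t = x₂ t + d t)
    (hdx₂ : ∀ t, deriv x₂ t = a t + b t * u t)
    (hu : ∀ t, u t = -(b t)⁻¹ *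
      (a t + k₁ * x₁ t + k₂ * x₂ t + kᵢ * ∫ s in (0:ℝ)..t, x₁ s)) :
    Differentiable ℝ (deriv x₁) ∧ Differentiable ℝ (deriv (deriv x₁)) ∧
    ∀ t, deriv (deriv (deriv x₁)) t + k₂ * deriv (deriv x₁) t +
      k₁ * deriv x₁ t + kᵢ * x₁ t = k₂ * deriv d t + deriv (deriv d) t := by
  set v : ℝ → ℝ := fun t => k₁ * x₁ t + k₂ * x₂ t + kᵢ * ∫ s in (0:ℝ)..t, x₁ s
  have hx₂' : deriv x₂ = -v :=
    deriv_eq_neg_of_inverse_control hb hdx₂ fun t => by rw [hu t]; ring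
  have hx₁' : deriv x₁ = x₂ + d := funext hdx₁
  have hx₁'' : deriv (deriv x₁) = -v + deriv d := funext fun t => by
    rw [hx₁', ((hx₂ t).hasDerivAt.add (hd t).hasDerivAt).deriv, hx₂']
    rfl
  have hx₁''' t : HasDerivAt (deriv (deriv x₁))
      (-(k₁ * deriv x₁ t + k₂ * deriv x₂ t + kᵢ * x₁ t) + deriv (deriv d) t) t :=
    hx₁'' ▸ (hasDerivAt_linear_add_integral k₁ k₂ kᵢ 0 t hx₁ (hx₂ t)).neg.add (hd' t).hasDerivAt
  refine ⟨hx₁' ▸ hx₂.add hd, fun t => (hx₁''' t).differentiableAt, fun t => ?_⟩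
  rw [(hx₁''' t).deriv, hx₁'', hx₂']
  simp only [Pi.add_apply, Pi.neg_apply]
  ring

/-- FLC with integral action (FLC-I) applied to ẋ₁ = x₂ + d, ẋ₂ = a + b·u with
u = -b⁻¹(a + k₁x₁ + k₂x₂ + kᵢ∫₀ᵗ x₁): the closed loop satisfies
x₁''' + k₂x₁'' + k₁x₁' + kᵢx₁ = k₂ḋ + d̈. -/
theorem stmt_3 (k₁ k₂ kᵢ : ℝ) (x₁ x₂ d a b u : ℝ → ℝ)
    (hx₁ : Differentiable ℝ x₁) (hx₂ : Differentiable ℝ x₂)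
    (hd : Differentiable ℝ d) (hd' : Differentiable ℝ (deriv d))
    (hx₁c : Continuous x₁) (hb : ∀ t, b t ≠ 0)
    (hdx₁ : ∀ t, deriv x₁ t = x₂ t + d t)
    (hdx₂ : ∀ t, deriv x₂ t = a t + b t * u t)
    (hu : ∀ t, u t = -(b t)⁻¹ *
      (a t + k₁ * x₁ t + k₂ * x₂ t + kᵢ * ∫ s in (0:ℝ)..t, x₁ s)) :
    Differentiable ℝ (deriv x₁) ∧ Differentiable ℝ (deriv (deriv x₁)) ∧
    ∀ t, deriv (deriv (deriv x₁)) t + k₂ * deriv (deriv x₁) t +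
      k₁ * deriv x₁ t + kᵢ * x₁ t = k₂ * deriv d t + deriv (deriv d) t :=
  stmt_3_general k₁ k₂ kᵢ x₁ x₂ d a b u hx₁ hx₂ hd hd' hb hdx₁ hdx₂ hu
end

section
/- Let l₁, l₂ ∈ ℝ, and let x₁, x₂, d, a, b, u, p : ℝ → ℝ be functions with x₁, x₂, d, p differentiable, such that for all t: x₁'(t) = x₂(t) + d(t), x₂'(t) = a(t) + b(t)·u(t), and p'(t) = -l₁·p(t) - (l₁·(l₁·x₁(t) + l₂·x₂(t)) + l₁·x₂(t) + l₂·(a(t) + b(t)·u(t))). Define d̂(t) = p(t) + l₁·x₁(t) + l₂·x₂(t). Then d̂ is differentiable with d̂'(t) = l₁·(d(t) - d̂(t)) for all t; consequently the estimation error e(t) = d(t) - d̂(t) satisfies e'(t) + l₁·e(t) = d'(t) for all t. -/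
/-!
The observer is built so that the unknown input `a + b u` and the state feedback cancel: the
derivative of `d̂ = p + l₁ x₁ + l₂ x₂` is `ṗ + l₁ (x₂ + d) + l₂ (a + b u)`, in which everything but
`l₁ (d - d̂)` cancels against `ṗ`. The error equation is then linearity of the derivative.
-/

theorem hasDerivAt_disturbanceEstimate {l₁ l₂ t δ w : ℝ} {x₁ x₂ p : ℝ → ℝ}
    (hx₁ : HasDerivAt x₁ (x₂ t + δ) t)
    (hx₂ : HasDerivAt x₂ w t)
    (hp : HasDerivAt p
      (-l₁ * p t - (l₁ * (l₁ * x₁ t + l₂ * x₂ t) + l₁ * x₂ t + l₂ * w)) t) :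
    HasDerivAt (fun τ => p τ + l₁ * x₁ τ + l₂ * x₂ τ)
      (l₁ * (δ - (p t + l₁ * x₁ t + l₂ * x₂ t))) t :=
  ((hp.fun_add (hx₁.const_mul l₁)).fun_add (hx₂.const_mul l₂)).congr_deriv (by ring)

theorem deriv_sub_add_mul_sub_eq_deriv {d dhat : ℝ → ℝ} {l t : ℝ}
    (hd : DifferentiableAt ℝ d t) (hdhat : HasDerivAt dhat (l * (d t - dhat t)) t) :
    deriv (fun τ => d τ - dhat τ) t + l * (d t - dhat t) = deriv d t := by
  rw [(hd.hasDerivAt.fun_sub hdhat).deriv, sub_add_cancel]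

/-- Basic nonlinear disturbance observer (BNDO): with internal state p satisfying
ṗ = -l₁p - (l₁(l₁x₁ + l₂x₂) + l₁x₂ + l₂(a + bu)) and estimate
d̂ = p + l₁x₁ + l₂x₂, one gets d̂' = l₁(d - d̂), hence the error
e = d - d̂ satisfies ė + l₁e = ḋ. -/
theorem stmt_5 (l₁ l₂ : ℝ) (x₁ x₂ d a b u p : ℝ → ℝ)
    (hx₁ : Differentiable ℝ x₁) (hx₂ : Differentiable ℝ x₂)
    (hd : Differentiable ℝ d) (hp : Differentiable ℝ p)
    (hdx₁ : ∀ t, deriv x₁ t = x₂ t + d t)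
    (hdx₂ : ∀ t, deriv x₂ t = a t + b t * u t)
    (hdp : ∀ t, deriv p t = -l₁ * p t -
      (l₁ * (l₁ * x₁ t + l₂ * x₂ t) + l₁ * x₂ t + l₂ * (a t + b t * u t)))
    (dhat : ℝ → ℝ) (hdhat : ∀ t, dhat t = p t + l₁ * x₁ t + l₂ * x₂ t) :
    Differentiable ℝ dhat ∧
    (∀ t, deriv dhat t = l₁ * (d t - dhat t)) ∧
    (∀ t, deriv (fun τ => d τ - dhat τ) t + l₁ * (d t - dhat t) = deriv d t) := by
  obtain rfl : dhat = fun τ => p τ + l₁ * x₁ τ + l₂ * x₂ τ := funext hdhat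
  have hdhat_deriv : ∀ t, HasDerivAt (fun τ => p τ + l₁ * x₁ τ + l₂ * x₂ τ)
      (l₁ * (d t - (p t + l₁ * x₁ t + l₂ * x₂ t))) t := fun t =>
    hasDerivAt_disturbanceEstimate (hdx₁ t ▸ (hx₁ t).hasDerivAt) (hdx₂ t ▸ (hx₂ t).hasDerivAt)
      (hdp t ▸ (hp t).hasDerivAt)
  exact ⟨fun t => (hdhat_deriv t).differentiableAt, fun t => (hdhat_deriv t).deriv,
    fun t => deriv_sub_add_mul_sub_eq_deriv (hd t) (hdhat_deriv t)⟩
end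

section
/- Let τ_c, ε, δ, α, T ∈ ℝ with |δ| ≤ T, |τ_c + ε| > |ε|, and 2·α·(|τ_c + ε| − |ε|) > T·(|τ_c + ε| + |ε|). Then τ_c·(−2·α·sgn(τ_c + ε) + δ) < 0. -/
/-!
Since `|ε| < |τc + ε|`, `τc = (τc + ε) - ε` and `τc + ε` lie on the same side of `0`,
so `τc * sgn (τc + ε) = |τc|` and the expression is at most `|τc| * (|δ| - 2α)`. Because
`T ≥ |δ| ≥ 0` and `|τc + ε| - |ε| ≤ |τc + ε| + |ε|`, the learning-rate condition forces `T < 2α`,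
hence `|δ| < 2α` and the expression is negative.
-/

namespace Real

theorem sign_eq_sign_of_abs_sub_lt {x y : ℝ} (h : |x - y| < |y|) : sign x = sign y := by
  rcases lt_trichotomy y 0 with hy | rfl | hy
  · rw [abs_of_neg hy] at h
    rw [sign_of_neg hy, sign_of_neg (by linarith [le_abs_self (x - y)])]
  · exact absurd h (by simp)
  · rw [abs_of_pos hy] at h
    rw [sign_of_pos hy, sign_of_pos (by linarith [neg_abs_le (x - y)])]

theorem mul_sign_self (x : ℝ) : x * sign x = |x| := by
  rcases lt_trichotomy x 0 with hx | rfl | hx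
  · rw [sign_of_neg hx, abs_of_neg hx, mul_neg_one]
  · simp
  · rw [sign_of_pos hx, abs_of_pos hx, mul_one]

theorem mul_neg_mul_sign_add_neg {x c δ : ℝ} (hx : x ≠ 0) (hδ : |δ| < c) :
    x * (-c * sign x + δ) < 0 :=
  calc x * (-c * sign x + δ) = -(c * |x|) + x * δ := by rw [← mul_sign_self]; ring
    _ ≤ -(c * |x|) + |x| * |δ| := by rw [← abs_mul]; gcongr; exact le_abs_self _
    _ = |x| * (|δ| - c) := by ring
    _ < 0 := mul_neg_of_pos_of_neg (abs_pos.mpr hx) (by linarith)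

end Real

theorem lt_of_mul_add_lt_mul_sub {T c a b : ℝ} (hT : 0 ≤ T) (hb : 0 ≤ b) (hba : b < a)
    (h : T * (a + b) < c * (a - b)) : T < c := by
  refine lt_of_mul_lt_mul_right ?_ (sub_nonneg.mpr hba.le)
  calc T * (a - b) ≤ T * (a + b) := by gcongr; linarith
    _ < c * (a - b) := h

/-- Key Lyapunov-derivative inequality of Theorem 1 (stability of the SMC
theory-based learning algorithm): with |δ| ≤ T, |τ_c + ε| > |ε| and
2α(|τ_c + ε| − |ε|) > T(|τ_c + ε| + |ε|), one has
τ_c·(−2α·sgn(τ_c + ε) + δ) < 0. -/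
theorem stmt_8 (τc ε δ α T : ℝ) (hδ : |δ| ≤ T) (hne : |ε| < |τc + ε|)
    (hα : T * (|τc + ε| + |ε|) < 2 * α * (|τc + ε| - |ε|)) :
    τc * (-2 * α * Real.sign (τc + ε) + δ) < 0 := by
  have hsign : Real.sign τc = Real.sign (τc + ε) :=
    Real.sign_eq_sign_of_abs_sub_lt (by rwa [sub_add_cancel_left, abs_neg])
  have hτc : τc ≠ 0 := by
    rintro rfl
    simp at hne
  have hT : T < 2 * α :=
    lt_of_mul_add_lt_mul_sub ((abs_nonneg δ).trans hδ) (abs_nonneg ε) hne hα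
  rw [← hsign, neg_mul 2 α]
  exact Real.mul_neg_mul_sign_add_neg hτc (hδ.trans_lt hT)
end

section
/- Let K be a positive natural number, let w̲, w̄, F : Fin K → ℝ and q, α, g ∈ ℝ. Define h : Fin K → ℝ by h(k) = q·w̲(k) + (1 − q)·w̄(k). Assume ∑ₖ w̲(k) = 1, ∑ₖ w̄(k) = 1, ∑ₖ h(k)² ≠ 0, and ∑ₖ F(k)·(w̲(k) − w̄(k)) ≠ 0. Define Ḟ(k) = −(h(k)/∑ⱼ h(j)²)·α·g, q̇ = −α·g/∑ₖ F(k)·(w̲(k) − w̄(k)), and ẇ̲(k) = −w̲(k)·(4·α·g) + w̲(k)·(∑ⱼ w̲(j))·(4·α·g), ẇ̄(k) = −w̄(k)·(4·α·g) + w̄(k)·(∑ⱼ w̄(j))·(4·α·g). Then q·∑ₖ(Ḟ(k)·w̲(k) + F(k)·ẇ̲(k)) + (1 − q)·∑ₖ(Ḟ(k)·w̄(k) + F(k)·ẇ̄(k)) + q̇·∑ₖ F(k)·(w̲(k) − w̄(k)) = −2·α·g. -/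
/-!
Because the normalized firing strengths sum to one, their derivatives vanish identically, so
τ̇_n = ∑ Ḟ(k) h(k) + q̇ ∑ F(k) (w̲(k) − w̄(k)) with h = q w̲ + (1 − q) w̄. The adaptation rule for F
is h scaled by −αg/∑ h², and the rule for q is −αg divided by ∑ F (w̲ − w̄), so each of the two
terms contributes exactly −αg.
-/

open Finset

theorem eq_zero_of_eq_neg_mul_add_mul_sum_mul {ι : Type*} [Fintype ι] {w w' : ι → ℝ} {c : ℝ}
    (hw : ∑ k, w k = 1) (hw' : ∀ k, w' k = -w k * c + w k * (∑ j, w j) * c) : w' = 0 := by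
  funext k
  rw [hw' k, hw, Pi.zero_apply]
  ring

theorem sum_mul_self_eq_of_eq_neg_div_sum_sq {ι : Type*} [Fintype ι] {h F' : ι → ℝ} {a b : ℝ}
    (hS : ∑ j, h j ^ 2 ≠ 0) (hF' : ∀ k, F' k = -(h k / ∑ j, h j ^ 2) * a * b) :
    ∑ k, F' k * h k = -(a * b) := by
  calc ∑ k, F' k * h k = -(a * b) / (∑ j, h j ^ 2) * ∑ j, h j ^ 2 := by
        rw [mul_sum]
        refine sum_congr rfl fun k _ => ?_
        rw [hF' k]
        ring
    _ = -(a * b) := div_mul_cancel₀ _ hS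

theorem stmt_11_general (K : ℕ) (wl wu F : Fin K → ℝ) (q α g : ℝ)
    (h : Fin K → ℝ) (hh : ∀ k, h k = q * wl k + (1 - q) * wu k)
    (hwl : ∑ k, wl k = 1) (hwu : ∑ k, wu k = 1)
    (hh2 : ∑ k, (h k) ^ 2 ≠ 0)
    (hF : ∑ k, F k * (wl k - wu k) ≠ 0)
    (F' : Fin K → ℝ) (hF' : ∀ k, F' k = -(h k / ∑ j, (h j) ^ 2) * α * g)
    (q' : ℝ) (hq' : q' = -(α * g) / ∑ k, F k * (wl k - wu k))
    (wl' wu' : Fin K → ℝ)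
    (hwl' : ∀ k, wl' k = -wl k * (4 * α * g) + wl k * (∑ j, wl j) * (4 * α * g))
    (hwu' : ∀ k, wu' k = -wu k * (4 * α * g) + wu k * (∑ j, wu j) * (4 * α * g)) :
    q * (∑ k, (F' k * wl k + F k * wl' k)) +
      (1 - q) * (∑ k, (F' k * wu k + F k * wu' k)) +
      q' * ∑ k, F k * (wl k - wu k) = -2 * α * g := by
  have hwl0 := eq_zero_of_eq_neg_mul_add_mul_sum_mul hwl hwl'
  have hwu0 := eq_zero_of_eq_neg_mul_add_mul_sum_mul hwu hwu'
  have hτ : q * ∑ k, F' k * wl k + (1 - q) * ∑ k, F' k * wu k = ∑ k, F' k * h k := by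
    simp only [mul_sum, ← sum_add_distrib, hh]
    exact sum_congr rfl fun k _ => by ring
  simp only [hwl0, hwu0, Pi.zero_apply, mul_zero, add_zero]
  rw [hτ, sum_mul_self_eq_of_eq_neg_div_sum_sq hh2 hF', hq', div_mul_cancel₀ _ hF]
  ring

/-- Appendix computation τ̇_n = −2α·sgn(s) for the T2NFS output
τ_n = q∑F·w̲ + (1−q)∑F·w̄ under the SMC theory-based adaptation rules. -/
theorem stmt_11 (K : ℕ) (hK : 0 < K) (wl wu F : Fin K → ℝ) (q α g : ℝ)
    (h : Fin K → ℝ) (hh : ∀ k, h k = q * wl k + (1 - q) * wu k)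
    (hwl : ∑ k, wl k = 1) (hwu : ∑ k, wu k = 1)
    (hh2 : ∑ k, (h k) ^ 2 ≠ 0)
    (hF : ∑ k, F k * (wl k - wu k) ≠ 0)
    (F' : Fin K → ℝ) (hF' : ∀ k, F' k = -(h k / ∑ j, (h j) ^ 2) * α * g)
    (q' : ℝ) (hq' : q' = -(α * g) / ∑ k, F k * (wl k - wu k))
    (wl' wu' : Fin K → ℝ)
    (hwl' : ∀ k, wl' k = -wl k * (4 * α * g) + wl k * (∑ j, wl j) * (4 * α * g))
    (hwu' : ∀ k, wu' k = -wu k * (4 * α * g) + wu k * (∑ j, wu j) * (4 * α * g)) :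
    q * (∑ k, (F' k * wl k + F k * wl' k)) +
      (1 - q) * (∑ k, (F' k * wu k + F k * wu' k)) +
      q' * ∑ k, F k * (wl k - wu k) = -2 * α * g :=
  stmt_11_general K wl wu F q α g h hh hwl hwu hh2 hF F' hF' q' hq' wl' wu' hwl' hwu'
end

section
/- Let c > 0 and let s : ℝ → ℝ be differentiable with s(t)·s'(t) ≤ −c·|s(t)| for all t ≥ 0. Then |s(t)| ≤ max(|s(0)| − c·t, 0) for all t ≥ 0; in particular s(t) = 0 for all t ≥ |s(0)|/c. -/
/-! Since `s s' ≤ 0`, `s²` decreases, so once `s` reaches zero it stays there. Before that time `s`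
has no zero, `|s|` is differentiable with `(d/dt)|s| = sign(s)·s' ≤ -c`, and so `|s| + c t`
decreases. -/

open Set

variable {s : ℝ → ℝ}

theorem abs_antitoneOn_of_mul_deriv_nonpos (hs : Differentiable ℝ s) {a : ℝ}
    (h : ∀ t, a ≤ t → s t * deriv s t ≤ 0) : AntitoneOn (fun t => |s t|) (Ici a) := by
  have hsq : AntitoneOn (fun t => s t ^ 2) (Ici a) := by
    refine antitoneOn_of_hasDerivWithinAt_nonpos (convex_Ici a) (hs.continuous.pow 2).continuousOn
      (fun t _ => ((hs t).hasDerivAt.pow 2).hasDerivWithinAt) fun t ht => ?_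
    rw [interior_Ici] at ht
    simp only [Nat.cast_ofNat, Nat.add_one_sub_one, pow_one]
    nlinarith [h t (le_of_lt ht)]
  exact fun x hx y hy hxy => sq_le_sq.mp (hsq hx hy hxy)

theorem eq_zero_of_le_of_eq_zero (hs : Differentiable ℝ s) {a u t : ℝ}
    (h : ∀ t, a ≤ t → s t * deriv s t ≤ 0) (hau : a ≤ u) (hut : u ≤ t) (hu : s u = 0) :
    s t = 0 := by
  have := abs_antitoneOn_of_mul_deriv_nonpos hs h hau (hau.trans hut) hut
  simp only [hu, abs_zero, abs_nonpos_iff] at this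
  exact this

theorem abs_add_mul_antitoneOn (hs : Differentiable ℝ s) {c a b : ℝ}
    (h : ∀ t ∈ Icc a b, s t * deriv s t ≤ -c * |s t|) (hne : ∀ t ∈ Icc a b, s t ≠ 0) :
    AntitoneOn (fun t => |s t| + c * t) (Icc a b) := by
  refine antitoneOn_of_hasDerivWithinAt_nonpos (convex_Icc a b)
    ((hs.continuous.abs.add (continuous_const_mul c)).continuousOn)
    (fun t ht => (((hasDerivAt_abs (hne t (interior_subset ht))).comp t (hs t).hasDerivAt).add
      ((hasDerivAt_id t).const_mul c)).hasDerivWithinAt) fun t ht => ?_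
  have ht := interior_subset ht
  have hpos : 0 < |s t| := abs_pos.mpr (hne t ht)
  -- `|s| * (sign s * s') = s * s'`, so dividing the hypothesis by `|s| > 0` gives `sign s * s' ≤ -c`.
  have hsign : |s t| * (SignType.sign (s t) * deriv s t) ≤ |s t| * -c := by
    rw [← mul_assoc, abs_mul_sign]
    linarith [h t ht]
  have := le_of_mul_le_mul_left hsign hpos
  simp only [mul_one]
  linarith

/-- Sliding-mode reaching argument of Theorem 2: if s·ṡ ≤ −c·|s| on [0, ∞)
with c > 0, then |s(t)| ≤ max(|s(0)| − c·t, 0) and s vanishes for all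
t ≥ |s(0)|/c. -/
theorem stmt_14 (c : ℝ) (hc : 0 < c) (s : ℝ → ℝ) (hs : Differentiable ℝ s)
    (hderiv : ∀ t, 0 ≤ t → s t * deriv s t ≤ -c * |s t|) :
    (∀ t, 0 ≤ t → |s t| ≤ max (|s 0| - c * t) 0) ∧
    (∀ t, |s 0| / c ≤ t → s t = 0) := by
  have hdecr : ∀ t, 0 ≤ t → s t * deriv s t ≤ 0 := fun t ht =>
    (hderiv t ht).trans (by nlinarith [abs_nonneg (s t)])
  have hbound : ∀ t, 0 ≤ t → |s t| ≤ max (|s 0| - c * t) 0 := by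
    intro t ht
    by_cases hst : s t = 0
    · simp [hst]
    have hne : ∀ u ∈ Icc 0 t, s u ≠ 0 := fun u hu hsu =>
      hst (eq_zero_of_le_of_eq_zero hs hdecr hu.1 hu.2 hsu)
    have := abs_add_mul_antitoneOn hs (fun u hu => hderiv u hu.1) hne
      (left_mem_Icc.mpr ht) (right_mem_Icc.mpr ht) ht
    simp only [mul_zero, add_zero] at this
    exact le_max_of_le_left (by linarith)
  refine ⟨hbound, fun t ht => ?_⟩
  rw [div_le_iff₀ hc] at ht
  have := hbound t (by nlinarith [abs_nonneg (s 0)])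
  rw [max_eq_right (by linarith)] at this
  exact abs_nonpos_iff.mp this
end

section
/- Let k₁, k₂ ∈ ℝ, and let x₁, x₂, d, d̂, a, b, u : ℝ → ℝ be functions such that x₁, x₂, d, d̂ are differentiable, b(t) ≠ 0 for all t, and for all t: x₁'(t) = x₂(t) + d(t), x₂'(t) = a(t) + b(t)·u(t), and u(t) = -b(t)⁻¹·(a(t) + k₁·x₁(t) + k₂·(x₂(t) + d̂(t)) + d̂'(t)). Then, with e(t) = d(t) − d̂(t), x₁ is twice differentiable and x₁''(t) + k₂·x₁'(t) + k₁·x₁(t) = k₂·e(t) + e'(t) for all t. -/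
theorem stmt_15_general (k₁ k₂ : ℝ) (x₁ x₂ d dhat a b u : ℝ → ℝ)
    (hx₂ : Differentiable ℝ x₂)
    (hd : Differentiable ℝ d) (hdhat : Differentiable ℝ dhat)
    (hb : ∀ t, b t ≠ 0)
    (hdx₁ : ∀ t, deriv x₁ t = x₂ t + d t)
    (hdx₂ : ∀ t, deriv x₂ t = a t + b t * u t)
    (hu : ∀ t, u t = -(b t)⁻¹ *
      (a t + k₁ * x₁ t + k₂ * (x₂ t + dhat t) + deriv dhat t)) :
    Differentiable ℝ (deriv x₁) ∧
    ∀ t, deriv (deriv x₁) t + k₂ * deriv x₁ t + k₁ * x₁ t =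
      k₂ * (d t - dhat t) + deriv (fun τ => d τ - dhat τ) t := by
  have hderiv : deriv x₁ = x₂ + d := funext hdx₁
  refine ⟨hderiv ▸ hx₂.add hd, fun t => ?_⟩
  have hinput : b t * u t = -(a t + k₁ * x₁ t + k₂ * (x₂ t + dhat t) + deriv dhat t) := by
    rw [hu t, neg_mul, mul_neg, mul_inv_cancel_left₀ (hb t)]
  have hsecond : deriv (deriv x₁) t = deriv x₂ t + deriv d t :=
    hderiv ▸ deriv_add (hx₂ t) (hd t)
  rw [hsecond, hdx₂, hinput, hdx₁, deriv_fun_sub (hd t) (hdhat t)]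
  ring

/-- FLC based on the self-learning disturbance observer (FLC-SLDO):
u = -b⁻¹(a + k₁x₁ + k₂(x₂ + d̂) + d̂') applied to ẋ₁ = x₂ + d,
ẋ₂ = a + b·u yields, with e = d − d̂, the closed loop
ẍ₁ + k₂ẋ₁ + k₁x₁ = k₂e + ė (equation (52)). -/
theorem stmt_15 (k₁ k₂ : ℝ) (x₁ x₂ d dhat a b u : ℝ → ℝ)
    (hx₁ : Differentiable ℝ x₁) (hx₂ : Differentiable ℝ x₂)
    (hd : Differentiable ℝ d) (hdhat : Differentiable ℝ dhat)
    (hb : ∀ t, b t ≠ 0)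
    (hdx₁ : ∀ t, deriv x₁ t = x₂ t + d t)
    (hdx₂ : ∀ t, deriv x₂ t = a t + b t * u t)
    (hu : ∀ t, u t = -(b t)⁻¹ *
      (a t + k₁ * x₁ t + k₂ * (x₂ t + dhat t) + deriv dhat t)) :
    Differentiable ℝ (deriv x₁) ∧
    ∀ t, deriv (deriv x₁) t + k₂ * deriv x₁ t + k₁ * x₁ t =
      k₂ * (d t - dhat t) + deriv (fun τ => d τ - dhat τ) t :=
  stmt_15_general k₁ k₂ x₁ x₂ d dhat a b u hx₂ hd hdhat hb hdx₁ hdx₂ hu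
end

section
/- Let η, l₁ > 0, D ≥ 0, and α > D. Let d : ℝ → ℝ be twice differentiable with |d''(t)| ≤ D for all t ≥ 0, and let e : ℝ → ℝ be twice differentiable such that, with s(t) = (1 + η·l₁)·e'(t) + l₁·e(t), one has (1 + η·l₁)·e''(t) = −l₁·e'(t) − 2·α·sgn(s(t)) + d''(t) for all t ≥ 0. Then e(t) → 0 and e'(t) → 0 as t → ∞. -/
/-!
The sliding variable `s = (1 + η l₁) ė + l₁ e` obeys `ṡ = -2α sgn s + d̈`, so
`sgn s · ṡ ≤ -(2α - D) < 0`: this reachability condition drives `s` to zero in finite time,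
and since `s²` is nonincreasing it stays there. On the sliding surface `s = 0` the error
solves the linear equation `ė = -(l₁ / (1 + η l₁)) e`, so it decays exponentially.
-/

open Filter Set Topology

lemma antitoneOn_sq_of_mul_deriv_nonpos {s : ℝ → ℝ} {a : ℝ} (hs : Differentiable ℝ s)
    (h : ∀ t, a ≤ t → s t * deriv s t ≤ 0) : AntitoneOn (fun t => s t ^ 2) (Ici a) := by
  have hsq : Differentiable ℝ (fun t => s t ^ 2) := hs.pow 2
  refine antitoneOn_of_deriv_nonpos (convex_Ici a) hsq.continuous.continuousOn
    (hsq.differentiableOn.mono interior_subset) fun t ht => ?_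
  rw [interior_Ici] at ht
  have hderiv : deriv (fun t => s t ^ 2) t = 2 * (s t * deriv s t) := by
    rw [deriv_fun_pow (hs t)]; ring
  rw [hderiv]
  linarith [h t (le_of_lt ht)]

lemma exists_zero_of_deriv_le_neg {f : ℝ → ℝ} {a δ : ℝ} (hf : Differentiable ℝ f) (hδ : 0 < δ)
    (hder : ∀ t, a ≤ t → 0 < f t → deriv f t ≤ -δ) (ha : 0 < f a) : ∃ T, a ≤ T ∧ f T = 0 := by
  by_contra! hne
  have hpos : ∀ t, a ≤ t → 0 < f t := by
    intro t ht
    by_contra! hle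
    obtain ⟨z, hz, hz0⟩ :=
      intermediate_value_Icc' ht hf.continuous.continuousOn ⟨hle, ha.le⟩
    exact hne z hz.1 hz0
  have hg : Differentiable ℝ (fun t => f t + δ * t) := hf.add (differentiable_id.const_mul δ)
  have hanti : AntitoneOn (fun t => f t + δ * t) (Ici a) := by
    refine antitoneOn_of_deriv_nonpos (convex_Ici a) hg.continuous.continuousOn
      (hg.differentiableOn.mono interior_subset) fun t ht => ?_
    rw [interior_Ici] at ht
    rw [((hf t).hasDerivAt.fun_add ((hasDerivAt_id' t).const_mul δ)).deriv]
    linarith [hder t ht.le (hpos t ht.le)]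
  set t₁ := a + f a / δ
  have ht₁ : a ≤ t₁ := le_add_of_nonneg_right (div_pos ha hδ).le
  have hdrop : f t₁ + δ * t₁ ≤ f a + δ * a := hanti self_mem_Ici ht₁ ht₁
  have hδt₁ : δ * t₁ = δ * a + f a := by simp only [t₁]; field_simp
  linarith [hpos t₁ ht₁]

theorem exists_forall_ge_eq_zero_of_sign_mul_deriv_le {s : ℝ → ℝ} {a δ : ℝ}
    (hs : Differentiable ℝ s) (hδ : 0 < δ)
    (h : ∀ t, a ≤ t → s t ≠ 0 → Real.sign (s t) * deriv s t ≤ -δ) :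
    ∃ T, a ≤ T ∧ ∀ t, T ≤ t → s t = 0 := by
  have hpos : ∀ t, a ≤ t → 0 < s t → deriv s t ≤ -δ := fun t ht hst => by
    simpa [Real.sign_of_pos hst] using h t ht hst.ne'
  have hneg : ∀ t, a ≤ t → s t < 0 → δ ≤ deriv s t := fun t ht hst => by
    have := h t ht hst.ne
    rw [Real.sign_of_neg hst] at this
    linarith
  obtain ⟨T, haT, hT⟩ : ∃ T, a ≤ T ∧ s T = 0 := by
    rcases lt_trichotomy (s a) 0 with ha | ha | ha
    · obtain ⟨T, haT, hT⟩ := exists_zero_of_deriv_le_neg hs.neg hδ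
        (fun t ht hst => by
          rw [deriv.neg']
          linarith [hneg t ht (neg_pos.mp hst)])
        (neg_pos.mpr ha)
      exact ⟨T, haT, neg_eq_zero.mp hT⟩
    · exact ⟨a, le_rfl, ha⟩
    · exact exists_zero_of_deriv_le_neg hs hδ hpos ha
  have hlyap : ∀ t, a ≤ t → s t * deriv s t ≤ 0 := fun t ht => by
    rcases lt_trichotomy (s t) 0 with hst | hst | hst
    · nlinarith [hneg t ht hst]
    · simp [hst]
    · nlinarith [hpos t ht hst]
  refine ⟨T, haT, fun t ht => ?_⟩
  have hsq : s t ^ 2 ≤ 0 := by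
    simpa [hT] using antitoneOn_sq_of_mul_deriv_nonpos hs hlyap (mem_Ici.mpr haT)
      (mem_Ici.mpr (haT.trans ht)) ht
  exact pow_eq_zero_iff two_ne_zero |>.mp (le_antisymm hsq (sq_nonneg _))

lemma sign_mul_le_of_eq_neg_mul_sign_add {x y w K D : ℝ} (hx : x ≠ 0)
    (hy : y = -K * Real.sign x + w) (hw : |w| ≤ D) : Real.sign x * y ≤ -(K - D) := by
  obtain ⟨hwl, hwu⟩ := abs_le.mp hw
  rcases Real.sign_apply_eq_of_ne_zero x hx with hsgn | hsgn <;> rw [hy, hsgn] <;> linarith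

theorem tendsto_zero_of_deriv_eq_neg_mul {e : ℝ → ℝ} {k T : ℝ} (he : Differentiable ℝ e)
    (hk : 0 < k) (hode : ∀ t, T ≤ t → deriv e t = -k * e t) : Tendsto e atTop (𝓝 0) := by
  have hexp : ∀ t, HasDerivAt (fun t => Real.exp (k * t)) (Real.exp (k * t) * k) t := fun t => by
    simpa using ((hasDerivAt_id t).const_mul k).exp
  have hconst : ∀ t, T ≤ t → e t * Real.exp (k * t) = e T * Real.exp (k * T) := fun t ht =>
    constant_of_has_deriv_right_zero
      ((he.continuous.mul (Real.continuous_exp.comp (continuous_const.mul continuous_id)))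
        |>.continuousOn)
      (fun x hx => by
        have := ((he x).hasDerivAt.mul (hexp x)).hasDerivWithinAt (s := Ici x)
        rwa [hode x hx.1, show -k * e x * Real.exp (k * x) + e x * (Real.exp (k * x) * k) = 0
          by ring] at this)
      t ⟨ht, le_rfl⟩
  have hdecay : Tendsto (fun t => e T * Real.exp (k * T) * Real.exp (-(k * t))) atTop (𝓝 0) := by
    simpa using (Real.tendsto_exp_neg_atTop_nhds_zero.comp
      (tendsto_id.const_mul_atTop hk)).const_mul (e T * Real.exp (k * T))
  refine hdecay.congr' ?_
  filter_upwards [eventually_ge_atTop T] with t ht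
  rw [← hconst t ht, mul_assoc, ← Real.exp_add, add_neg_cancel, Real.exp_zero, mul_one]

theorem stmt_17_general (η l₁ D α : ℝ) (hη : 0 < η) (hl₁ : 0 < l₁) (hD : 0 ≤ D)
    (hα : D < α) (d : ℝ → ℝ)
    (hdbdd : ∀ t : ℝ, 0 ≤ t → |deriv (deriv d) t| ≤ D)
    (e : ℝ → ℝ) (he : Differentiable ℝ e) (he' : Differentiable ℝ (deriv e))
    (heq : ∀ t : ℝ, 0 ≤ t →
      (1 + η * l₁) * deriv (deriv e) t =
        -l₁ * deriv e t -
          2 * α * Real.sign ((1 + η * l₁) * deriv e t + l₁ * e t) +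
          deriv (deriv d) t) :
    Filter.Tendsto e Filter.atTop (nhds 0) ∧
    Filter.Tendsto (deriv e) Filter.atTop (nhds 0) := by
  set c := 1 + η * l₁
  have hc : 0 < c := by positivity
  set s := fun t => c * deriv e t + l₁ * e t
  have hs : Differentiable ℝ s := (he'.const_mul c).add (he.const_mul l₁)
  have hds : ∀ t, 0 ≤ t → deriv s t = -(2 * α) * Real.sign (s t) + deriv (deriv d) t := by
    intro t ht
    rw [deriv_fun_add ((he' t).const_mul c) ((he t).const_mul l₁), deriv_const_mul c (he' t),
      deriv_const_mul l₁ (he t), heq t ht]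
    ring
  obtain ⟨T, -, hT⟩ := exists_forall_ge_eq_zero_of_sign_mul_deriv_le hs
    (by linarith : 0 < 2 * α - D)
    fun t ht hst => sign_mul_le_of_eq_neg_mul_sign_add hst (hds t ht) (hdbdd t ht)
  have hode : ∀ t, T ≤ t → deriv e t = -(l₁ / c) * e t := fun t ht => by
    have := hT t ht
    field_simp
    linarith
  have he0 := tendsto_zero_of_deriv_eq_neg_mul he (div_pos hl₁ hc) hode
  have hde0 : Tendsto (fun t => -(l₁ / c) * e t) atTop (𝓝 0) := by
    simpa using he0.const_mul (-(l₁ / c))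
  refine ⟨he0, hde0.congr' ?_⟩
  filter_upwards [eventually_ge_atTop T] with t ht
  exact (hode t ht).symm

/-- Trajectory-level form of Theorem 2 (stability of the SLDO): with
s = (1 + ηl₁)ė + l₁e, closed-loop dynamics
(1 + ηl₁)ë = −l₁ė − 2α·sgn(s) + d̈, η, l₁ > 0, |d̈| ≤ D and α > D,
the estimation error satisfies e(t) → 0 and ė(t) → 0 as t → ∞. -/
theorem stmt_17 (η l₁ D α : ℝ) (hη : 0 < η) (hl₁ : 0 < l₁) (hD : 0 ≤ D)
    (hα : D < α) (d : ℝ → ℝ)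
    (hd : Differentiable ℝ d) (hd' : Differentiable ℝ (deriv d))
    (hdbdd : ∀ t : ℝ, 0 ≤ t → |deriv (deriv d) t| ≤ D)
    (e : ℝ → ℝ) (he : Differentiable ℝ e) (he' : Differentiable ℝ (deriv e))
    (heq : ∀ t : ℝ, 0 ≤ t →
      (1 + η * l₁) * deriv (deriv e) t =
        -l₁ * deriv e t -
          2 * α * Real.sign ((1 + η * l₁) * deriv e t + l₁ * e t) +
          deriv (deriv d) t) :
    Filter.Tendsto e Filter.atTop (nhds 0) ∧
    Filter.Tendsto (deriv e) Filter.atTop (nhds 0) :=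
  stmt_17_general η l₁ D α hη hl₁ hD hα d hdbdd e he he' heq
end
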